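/- arXiv:0809.5186 — 5 statements merged into one kernel-verified Lean document; each statement's English description precedes it below -/
import Mathlib

section
/- Let ℓ ≥ 1 and M the (ℓ+1)×(ℓ+1) matrix with entries M_{i,j} = 2cos(2πij/(2ℓ)) for 0 ≤ i,j ≤ ℓ. Then (det M)² = 16·(2ℓ)^{ℓ+1}. -/
/-! The trapezoidal weights `w = (1/2, 1, …, 1, 1/2)` make the rows of `M` orthogonal: the
discrete cosine sums `∑ⱼ wⱼ cos (π m j / ℓ)` equal `ℓ` when `2ℓ ∣ m` and vanish otherwise, and
`2 cos x · 2 cos y = 2 cos (x + y) + 2 cos (x - y)` turns the entries of `M W M`, `W = diag w`, into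
two such sums. This gives `M W M = 2ℓ W⁻¹`, and taking determinants with `det W = 1/4` yields
`(det M)² = 16 (2ℓ)^(ℓ+1)`. -/

open Real Finset Matrix

lemma sum_range_cos_pi_mul_div_of_dvd {ℓ : ℕ} {m : ℤ} (hℓ : ℓ ≠ 0) (hm : 2 * (ℓ : ℤ) ∣ m) :
    ∑ j ∈ range (ℓ + 1), cos (π * m / ℓ * j) = ℓ + 1 := by
  obtain ⟨c, rfl⟩ := hm
  have hterm (j : ℕ) : cos (π * ↑(2 * ℓ * c : ℤ) / ℓ * j) = 1 := by
    rw [← cos_int_mul_two_pi (c * j)]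
    congr 1
    push_cast
    field_simp
  rw [sum_congr rfl fun j _ => hterm j]
  simp

lemma sum_range_cos_pi_mul_div_of_not_dvd {ℓ : ℕ} {m : ℤ} (hℓ : ℓ ≠ 0) (hm : ¬ 2 * (ℓ : ℤ) ∣ m) :
    ∑ j ∈ range (ℓ + 1), cos (π * m / ℓ * j) = (1 + (-1) ^ m) / 2 := by
  set a := π * m / ℓ
  have hsin : sin (a / 2) ≠ 0 := by
    rw [Ne, sin_eq_zero_iff]
    rintro ⟨c, hc⟩
    refine hm ⟨c, ?_⟩
    have : (m : ℝ) = 2 * ℓ * c := by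
      simp only [a] at hc
      field_simp at hc
      nlinarith [pi_pos]
    exact_mod_cast this
  -- Dirichlet kernel: multiply by `sin (a / 2)` and the sum telescopes.
  have hsum := sin_mul_sum_cos (ℓ + 1) a 0
  simp only [add_zero] at hsum
  apply mul_left_cancel₀ hsin
  rw [hsum]
  have hx : ((ℓ + 1 : ℕ) : ℝ) * a / 2 = (a / 2 + m * π / 2) := by
    simp only [a]; push_cast; field_simp; ring
  have hy : ((ℓ + 1 : ℕ) - 1 : ℝ) * a / 2 = m * π / 2 := by
    simp only [a]; push_cast; field_simp; ring
  rw [hx, hy]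
  have hprod := two_mul_sin_mul_cos (a / 2 + m * π / 2) (m * π / 2)
  rw [show a / 2 + m * π / 2 + m * π / 2 = a / 2 + m * π by ring, sin_add_int_mul_pi,
    add_sub_cancel_right] at hprod
  linear_combination hprod / 2

noncomputable def trapezoidWeight (ℓ j : ℕ) : ℝ := if j = 0 ∨ j = ℓ then 1 / 2 else 1

lemma trapezoidWeight_eq_mul {ℓ : ℕ} (hℓ : ℓ ≠ 0) (j : ℕ) :
    trapezoidWeight ℓ j = (if j = 0 then 1 / 2 else 1) * (if j = ℓ then 1 / 2 else 1) := by
  unfold trapezoidWeight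
  split_ifs <;> first | omega | norm_num

lemma sum_range_trapezoidWeight_mul {ℓ : ℕ} (hℓ : ℓ ≠ 0) (f : ℕ → ℝ) :
    ∑ j ∈ range (ℓ + 1), trapezoidWeight ℓ j * f j
      = ∑ j ∈ range (ℓ + 1), f j - f 0 / 2 - f ℓ / 2 := by
  have hterm (j : ℕ) : trapezoidWeight ℓ j * f j
      = f j - (if j = 0 then f j / 2 else 0) - (if j = ℓ then f j / 2 else 0) := by
    rw [trapezoidWeight_eq_mul hℓ]
    split_ifs <;> first | omega | ring
  simp [hterm, sum_sub_distrib, sum_ite_eq']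

lemma prod_range_trapezoidWeight {ℓ : ℕ} (hℓ : ℓ ≠ 0) :
    ∏ j ∈ range (ℓ + 1), trapezoidWeight ℓ j = 1 / 4 := by
  simp only [trapezoidWeight_eq_mul hℓ, prod_mul_distrib, prod_ite_eq', mem_range]
  norm_num

lemma sum_range_trapezoidWeight_mul_cos {ℓ : ℕ} (hℓ : ℓ ≠ 0) (m : ℤ) :
    ∑ j ∈ range (ℓ + 1), trapezoidWeight ℓ j * cos (π * m / ℓ * j)
      = if 2 * (ℓ : ℤ) ∣ m then (ℓ : ℝ) else 0 := by
  have hlast : cos (π * m / ℓ * ℓ) = (-1) ^ m := by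
    rw [← cos_int_mul_pi]
    congr 1
    field_simp
  rw [sum_range_trapezoidWeight_mul hℓ (fun j : ℕ => cos (π * m / ℓ * j))]
  simp only [Nat.cast_zero, mul_zero, cos_zero, hlast]
  split_ifs with hm
  · have hmeven : Even m := even_iff_two_dvd.2 ((dvd_mul_right 2 _).trans hm)
    rw [sum_range_cos_pi_mul_div_of_dvd hℓ hm, hmeven.neg_one_zpow]
    ring
  · rw [sum_range_cos_pi_mul_div_of_not_dvd hℓ hm]
    ring

lemma two_mul_dvd_natCast_sub_iff {ℓ i k : ℕ} (hℓ : ℓ ≠ 0) (hi : i ≤ ℓ) (hk : k ≤ ℓ) :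
    2 * (ℓ : ℤ) ∣ (i : ℤ) - k ↔ i = k := by
  refine ⟨fun h => ?_, fun h => by simp [h]⟩
  have := Int.eq_zero_of_abs_lt_dvd h (abs_lt.2 ⟨by omega, by omega⟩)
  omega

lemma two_mul_dvd_natCast_add_iff {ℓ i k : ℕ} (hℓ : ℓ ≠ 0) (hi : i ≤ ℓ) (hk : k ≤ ℓ) :
    2 * (ℓ : ℤ) ∣ (i : ℤ) + k ↔ i = 0 ∧ k = 0 ∨ i = ℓ ∧ k = ℓ := by
  refine ⟨fun h => ?_, ?_⟩
  · rcases (show (i : ℤ) + k ≤ 2 * ℓ by omega).lt_or_eq with hlt | heq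
    · have := Int.eq_zero_of_abs_lt_dvd h (abs_lt.2 ⟨by omega, hlt⟩)
      omega
    · omega
  · rintro (⟨rfl, rfl⟩ | ⟨rfl, rfl⟩)
    · simp
    · exact ⟨1, by ring⟩

noncomputable def cosMatrix (ℓ : ℕ) : Matrix (Fin (ℓ + 1)) (Fin (ℓ + 1)) ℝ :=
  of fun i j => 2 * cos (2 * π * i.val * j.val / (2 * ℓ))

lemma cosMatrix_mul_diagonal_mul_apply {ℓ : ℕ} (hℓ : ℓ ≠ 0) (i k : Fin (ℓ + 1)) :
    (cosMatrix ℓ * diagonal (fun j : Fin (ℓ + 1) => trapezoidWeight ℓ j) * cosMatrix ℓ) i k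
      = 2 * (if 2 * (ℓ : ℤ) ∣ (i : ℤ) + k then (ℓ : ℝ) else 0)
        + 2 * (if 2 * (ℓ : ℤ) ∣ (i : ℤ) - k then (ℓ : ℝ) else 0) := by
  have hterm (j : ℕ) : 2 * cos (2 * π * i.val * j / (2 * ℓ)) * trapezoidWeight ℓ j
        * (2 * cos (2 * π * j * k.val / (2 * ℓ)))
      = 2 * (trapezoidWeight ℓ j * cos (π * ((i : ℤ) + k : ℤ) / ℓ * j))
        + 2 * (trapezoidWeight ℓ j * cos (π * ((i : ℤ) - k : ℤ) / ℓ * j)) := by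
    have hx : 2 * π * i.val * j / (2 * ℓ) = π * (i : ℤ) / ℓ * j := by push_cast; field_simp
    have hy : 2 * π * j * k.val / (2 * ℓ) = π * (k : ℤ) / ℓ * j := by push_cast; field_simp
    have hprod := two_mul_cos_mul_cos (π * (i : ℤ) / ℓ * j) (π * (k : ℤ) / ℓ * j)
    rw [hx, hy]
    push_cast at hprod ⊢
    rw [show π * i / ℓ * j - π * k / ℓ * j = π * (i - k) / ℓ * j by ring,
      show π * i / ℓ * j + π * k / ℓ * j = π * (i + k) / ℓ * j by ring] at hprod
    linear_combination 2 * trapezoidWeight ℓ j * hprod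
  rw [mul_apply]
  simp only [mul_diagonal, cosMatrix, of_apply]
  rw [Fin.sum_univ_eq_sum_range (fun j : ℕ => 2 * cos (2 * π * i.val * j / (2 * ℓ))
    * trapezoidWeight ℓ j * (2 * cos (2 * π * j * k.val / (2 * ℓ)))) (ℓ + 1),
    sum_congr rfl fun j _ => hterm j, sum_add_distrib, ← mul_sum, ← mul_sum,
    sum_range_trapezoidWeight_mul_cos hℓ, sum_range_trapezoidWeight_mul_cos hℓ]

lemma cosMatrix_mul_diagonal_mul {ℓ : ℕ} (hℓ : ℓ ≠ 0) :
    cosMatrix ℓ * diagonal (fun j : Fin (ℓ + 1) => trapezoidWeight ℓ j) * cosMatrix ℓ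
      = diagonal fun i : Fin (ℓ + 1) => 2 * ℓ / trapezoidWeight ℓ i := by
  ext i k
  have hi := Nat.lt_succ_iff.mp i.isLt
  have hk := Nat.lt_succ_iff.mp k.isLt
  rw [cosMatrix_mul_diagonal_mul_apply hℓ, diagonal_apply]
  simp only [two_mul_dvd_natCast_add_iff hℓ hi hk, two_mul_dvd_natCast_sub_iff hℓ hi hk,
    Fin.val_inj]
  by_cases hik : i = k
  · subst hik
    simp only [and_self, if_true, trapezoidWeight]
    split_ifs <;> field_simp <;> ring
  · have hend : ¬((i : ℕ) = 0 ∧ (k : ℕ) = 0 ∨ (i : ℕ) = ℓ ∧ (k : ℕ) = ℓ) := by omega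
    rw [if_neg hend, if_neg hik, if_neg hik]
    ring

theorem stmt_5 (ℓ : ℕ) (hℓ : 1 ≤ ℓ)
    (M : Matrix (Fin (ℓ + 1)) (Fin (ℓ + 1)) ℝ)
    (hM : ∀ i j, M i j = 2 * Real.cos (2 * π * i.val * j.val / (2 * ℓ))) :
    (M.det) ^ 2 = 16 * (2 * ℓ : ℝ) ^ (ℓ + 1) := by
  have hℓ0 : ℓ ≠ 0 := by omega
  obtain rfl : M = cosMatrix ℓ := Matrix.ext hM
  have hdet := congrArg det (cosMatrix_mul_diagonal_mul hℓ0)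
  rw [det_mul, det_mul, det_diagonal, det_diagonal, prod_div_distrib, prod_const, card_univ,
    Fintype.card_fin, Fin.prod_univ_eq_prod_range (trapezoidWeight ℓ),
    prod_range_trapezoidWeight hℓ0] at hdet
  linear_combination 4 * hdet
end

section
/- Let ℓ ≥ 1 and define the ℓ×ℓ matrix X by X_{i,j} = 2cos(2π(2i−1)(2j−1)/(8ℓ)) for 1 ≤ i,j ≤ ℓ. Then X² = 2ℓ·I, the identity matrix scaled by 2ℓ. -/
/-!
By product-to-sum, `(X * X) i k = 2 ∑ⱼ cos ((2j+1) φ) + 2 ∑ⱼ cos ((2j+1) ψ)` with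
`φ = (i - k) π / (2ℓ)` and `ψ = (i + k + 1) π / (2ℓ)`. Telescoping gives
`2 sin φ ∑_{j<ℓ} cos ((2j+1) φ) = sin (2ℓ φ)`, so for `φ = m π / (2ℓ)` the sum vanishes unless
`2ℓ ∣ m`; among `m = i - k` and `m = i + k + 1` this only happens for `i = k`, where the first
sum is `ℓ`.
-/

open Real Finset Matrix

theorem two_mul_sin_mul_sum_cos_odd_mul (φ : ℝ) (n : ℕ) :
    2 * sin φ * ∑ j ∈ range n, cos ((2 * j + 1) * φ) = sin (2 * n * φ) := by
  induction n with
  | zero => simp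
  | succ n ih =>
    rw [sum_range_succ, mul_add, ih, two_mul_sin_mul_cos,
      show φ - (2 * n + 1) * φ = -(2 * n * φ) by ring, sin_neg]
    push_cast
    ring_nf

theorem sum_cos_odd_mul_eq_zero {n : ℕ} {m : ℤ} (hm : ¬ (2 * n : ℤ) ∣ m) :
    ∑ j ∈ range n, cos ((2 * j + 1) * (m * π / (2 * n))) = 0 := by
  rcases Nat.eq_zero_or_pos n with rfl | hn
  · simp
  have hsin : sin (m * π / (2 * n)) ≠ 0 := by
    rw [Ne, sin_eq_zero_iff]
    rintro ⟨k, hk⟩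
    refine hm ⟨k, ?_⟩
    have : (m : ℝ) = 2 * n * k := by
      field_simp at hk
      linarith
    exact_mod_cast this
  have h := two_mul_sin_mul_sum_cos_odd_mul (m * π / (2 * n)) n
  rw [show 2 * (n : ℝ) * (m * π / (2 * n)) = m * π by field_simp, sin_int_mul_pi] at h
  simpa [hsin] using h

theorem stmt_6_general (ℓ : ℕ)
    (X : Matrix (Fin ℓ) (Fin ℓ) ℝ)
    (hX : ∀ i j, X i j = 2 * Real.cos (2 * π * (2 * i.val + 1) * (2 * j.val + 1) / (8 * ℓ))) :
    X * X = (2 * ℓ : ℝ) • (1 : Matrix (Fin ℓ) (Fin ℓ) ℝ) := by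
  ext i k
  have hprod : ∀ j : Fin ℓ, X i j * X j k =
      2 * cos ((2 * j + 1) * (((i - k : ℤ) : ℝ) * π / (2 * ℓ))) +
        2 * cos ((2 * j + 1) * (((i + k + 1 : ℤ) : ℝ) * π / (2 * ℓ))) := by
    intro j
    rw [hX, hX, show ∀ a b : ℝ, 2 * cos a * (2 * cos b) = 2 * (2 * cos a * cos b) from
      fun a b => by ring, two_mul_cos_mul_cos, mul_add]
    congr 3 <;> push_cast <;> ring
  have hi := i.isLt
  have hk := k.isLt
  have hnot_dvd : ¬ (2 * ℓ : ℤ) ∣ (i + k + 1 : ℤ) := fun h => by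
    have := Int.eq_zero_of_abs_lt_dvd h (by rw [abs_lt]; omega)
    omega
  rw [mul_apply, sum_congr rfl fun j _ => hprod j, sum_add_distrib, ← mul_sum, ← mul_sum,
    Fin.sum_univ_eq_sum_range (fun j => cos ((2 * j + 1) * (((i - k : ℤ) : ℝ) * π / (2 * ℓ)))),
    Fin.sum_univ_eq_sum_range (fun j => cos ((2 * j + 1) * (((i + k + 1 : ℤ) : ℝ) * π / (2 * ℓ)))),
    sum_cos_odd_mul_eq_zero hnot_dvd, Matrix.smul_apply, one_apply]
  rcases eq_or_ne i k with rfl | hik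
  · simp
  · rw [sum_cos_odd_mul_eq_zero, if_neg hik]
    · simp
    refine fun h => hik (Fin.ext ?_)
    have := Int.eq_zero_of_abs_lt_dvd h (by rw [abs_lt]; omega)
    omega

theorem stmt_6 (ℓ : ℕ) (hℓ : 1 ≤ ℓ)
    (X : Matrix (Fin ℓ) (Fin ℓ) ℝ)
    (hX : ∀ i j, X i j = 2 * Real.cos (2 * π * (2 * i.val + 1) * (2 * j.val + 1) / (8 * ℓ))) :
    X * X = (2 * ℓ : ℝ) • (1 : Matrix (Fin ℓ) (Fin ℓ) ℝ) :=
  stmt_6_general ℓ X hX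
end

section
/- Let ℓ ≥ 1, X the ℓ×ℓ matrix with X_{i,j} = 2cos(2π(2i−1)(2j−1)/(8ℓ)), and Ω the ℓ×ℓ matrix with Ω_{i,j} = 2cos(2π(i−1)(2j−1)/(4ℓ)). Then det X = (1/√2)·det Ω, where √2 denotes the positive square root of 2. -/
/-!
With `θ j = (2j+1)π/(4ℓ)` we have `X i j = 2 cos((2i+1)θ j)` and `Ω i j = 2 cos(2i θ j)`.
Since `2 cos(2iθ) · 2 cos θ = 2 cos((2i+1)θ) + 2 cos((2i-1)θ)`, scaling the columns of `Ω` by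
`2 cos θ j` gives `L * X` for a lower bidiagonal `L` with determinant `2`. The scaling factor
`∏ j, 2 cos θ j` squares to `∏ j, (2 + 2 cos 2θ j) = 2`, by evaluating the Chebyshev
polynomial `T ℓ`, whose roots are the `cos 2θ j`, at `-1`.
-/

open Real Finset Matrix

open Polynomial Chebyshev in
lemma prod_two_add_two_cos_odd_mul_pi_div_two_mul (n : ℕ) (hn : n ≠ 0) :
    ∏ k ∈ range n, (2 + 2 * cos ((2 * k + 1) * π / (2 * n))) = 2 := by
  set c : ℕ → ℝ := fun k => cos ((2 * k + 1) * π / (2 * n))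
  have hinj : Set.InjOn c (range n) :=
    (range n).nodup_map_iff_injOn.mp (roots_T_real_nodup n)
  have hcard : Multiset.card (T ℝ n).roots = (T ℝ n).natDegree := by
    rw [roots_T_real, natDegree_T, Finset.card_val, card_image_of_injOn hinj, card_range,
      Int.natAbs_natCast]
  -- `T n = 2 ^ (n - 1) * ∏ k, (X - c k)`, evaluated at `-1`
  have heval := congrArg (eval (-1)) (C_leadingCoeff_mul_prod_multiset_X_sub_C hcard)
  rw [roots_T_real, T_eval_neg_one, leadingCoeff_T, eval_mul, eval_C, eval_multiset_prod,
    Multiset.map_map, ← Finset.prod_eq_multiset_prod, prod_image hinj] at heval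
  simp only [Function.comp_apply, eval_sub, eval_X, eval_C, Int.natAbs_natCast,
    Int.cast_negOnePow_natCast] at heval
  have hneg : ∏ k ∈ range n, (-1 - c k) = (-1) ^ n * ∏ k ∈ range n, (1 + c k) := by
    rw [show (-1) ^ n = ∏ _k ∈ range n, (-1 : ℝ) by simp, ← prod_mul_distrib]
    exact prod_congr rfl fun k _ => by ring
  have htwo : ∏ k ∈ range n, (2 + 2 * c k) = 2 ^ n * ∏ k ∈ range n, (1 + c k) := by
    rw [show (2 : ℝ) ^ n = ∏ _k ∈ range n, (2 : ℝ) by simp, ← prod_mul_distrib]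
    exact prod_congr rfl fun k _ => by ring
  rw [hneg, mul_left_comm, mul_eq_left₀ (by positivity)] at heval
  rw [htwo, ← pow_sub_one_mul hn, mul_right_comm, heval, one_mul]

lemma prod_two_mul_cos_odd_mul_pi_div_four_mul (n : ℕ) (hn : n ≠ 0) :
    ∏ k ∈ range n, 2 * cos ((2 * k + 1) * π / (4 * n)) = √2 := by
  have hsq : (∏ k ∈ range n, 2 * cos ((2 * k + 1) * π / (4 * n))) ^ 2 = 2 := by
    refine (prod_pow _ _ _).symm.trans (.trans (prod_congr rfl fun k _ => ?_)
      (prod_two_add_two_cos_odd_mul_pi_div_two_mul n hn))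
    rw [show (2 * k + 1) * π / (2 * n) = 2 * ((2 * k + 1) * π / (4 * n)) by field_simp; ring,
      cos_two_mul]
    ring
  have hnonneg : 0 ≤ ∏ k ∈ range n, 2 * cos ((2 * k + 1) * π / (4 * n)) := by
    refine prod_nonneg fun k hk => mul_nonneg zero_le_two (cos_nonneg_of_mem_Icc ⟨?_, ?_⟩)
    · have : 0 ≤ (2 * k + 1) * π / (4 * n) := by positivity
      linarith [pi_pos]
    · have hk : (k : ℝ) + 1 ≤ n := by exact_mod_cast mem_range.mp hk
      rw [div_le_iff₀ (by positivity)]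
      nlinarith [pi_pos]
  rw [← sqrt_sq hnonneg, hsq]

/-- Selects row `i - 1` of a matrix it multiplies on the left; row `0` selects itself because of
truncated subtraction, so `1 + predMatrix R n` is lower bidiagonal with a `2` in the corner. -/
def predMatrix (R : Type*) [Zero R] [One R] (n : ℕ) : Matrix (Fin n) (Fin n) R :=
  of fun i k => if (k : ℕ) = i - 1 then 1 else 0

lemma predMatrix_mul_apply {R : Type*} [NonAssocSemiring R] {n : ℕ} {m : Type*}
    (A : Matrix (Fin n) m R) (i : Fin n) (j : m) :
    (predMatrix R n * A) i j = A ⟨i - 1, by omega⟩ j := by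
  rw [mul_apply, sum_eq_single ⟨i - 1, by omega⟩]
  · simp [predMatrix]
  · intro k _ hk
    have : (k : ℕ) ≠ i - 1 := fun h => hk (Fin.ext h)
    simp [predMatrix, this]
  · simp

lemma det_one_add_predMatrix {R : Type*} [CommRing R] {n : ℕ} [NeZero n] :
    (1 + predMatrix R n).det = 2 := by
  have htri : (1 + predMatrix R n).IsLowerTriangular := by
    intro i k hik
    have hik : (i : ℕ) < k := hik
    simp [predMatrix, one_apply, Fin.ne_of_lt hik, show (k : ℕ) ≠ i - 1 by omega]
  rw [det_of_isLowerTriangular _ htri, prod_eq_single 0]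
  · simp [predMatrix, one_add_one_eq_two]
  · intro i _ hi
    have : (i : ℕ) ≠ i - 1 := by have := Fin.pos_iff_ne_zero.mpr hi; omega
    simp [predMatrix, this]
  · simp

lemma two_cos_even_mul_mul_two_cos (i : ℕ) (θ : ℝ) :
    2 * cos (2 * i * θ) * (2 * cos θ) =
      2 * cos ((2 * i + 1) * θ) + 2 * cos ((2 * (i - 1 : ℕ) + 1) * θ) := by
  rcases i with _ | m
  · simpa using two_mul (2 * cos θ)
  · have hsum : (2 * (m + 1 : ℕ) + 1) * θ = 2 * (m + 1 : ℕ) * θ + θ := by ring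
    have hdiff : (2 * (m + 1 - 1 : ℕ) + 1) * θ = 2 * (m + 1 : ℕ) * θ - θ := by
      push_cast
      ring
    rw [hsum, hdiff, cos_add, cos_sub]
    ring

lemma det_two_cos_even_mul_mul_prod {n : ℕ} [NeZero n] (θ : Fin n → ℝ) :
    (of fun i j : Fin n => 2 * cos (2 * (i : ℕ) * θ j)).det * ∏ j, 2 * cos (θ j) =
      2 * (of fun i j : Fin n => 2 * cos ((2 * (i : ℕ) + 1) * θ j)).det := by
  have hfactor :
      (of fun i j : Fin n => 2 * cos (2 * (i : ℕ) * θ j)) * diagonal (fun j => 2 * cos (θ j)) =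
        (1 + predMatrix ℝ n) * of fun i j : Fin n => 2 * cos ((2 * (i : ℕ) + 1) * θ j) := by
    ext i j
    rw [mul_diagonal, add_mul, one_mul, Matrix.add_apply, predMatrix_mul_apply]
    exact two_cos_even_mul_mul_two_cos i (θ j)
  simpa only [det_mul, det_diagonal, det_one_add_predMatrix] using congrArg det hfactor

theorem stmt_9 (ℓ : ℕ) (hℓ : 1 ≤ ℓ)
    (X Ω : Matrix (Fin ℓ) (Fin ℓ) ℝ)
    (hX : ∀ i j, X i j = 2 * Real.cos (2 * π * (2 * i.val + 1) * (2 * j.val + 1) / (8 * ℓ)))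
    (hΩ : ∀ i j, Ω i j = 2 * Real.cos (2 * π * i.val * (2 * j.val + 1) / (4 * ℓ))) :
    X.det = (1 / Real.sqrt 2) * Ω.det := by
  have hℓ0 : ℓ ≠ 0 := by omega
  have : NeZero ℓ := ⟨hℓ0⟩
  set θ : Fin ℓ → ℝ := fun j => (2 * (j : ℕ) + 1) * π / (4 * ℓ)
  have hXθ : X = of fun i j : Fin ℓ => 2 * cos ((2 * (i : ℕ) + 1) * θ j) := by
    ext i j
    rw [hX, of_apply]
    congr 2
    simp only [θ]
    field_simp
    ring
  have hΩθ : Ω = of fun i j : Fin ℓ => 2 * cos (2 * (i : ℕ) * θ j) := by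
    ext i j
    rw [hΩ, of_apply]
    congr 2
    simp only [θ]
    field_simp
  have hprod : ∏ j, 2 * cos (θ j) = √2 :=
    (Fin.prod_univ_eq_prod_range (fun k : ℕ => 2 * cos ((2 * k + 1) * π / (4 * ℓ))) ℓ).trans
      (prod_two_mul_cos_odd_mul_pi_div_four_mul ℓ hℓ0)
  have hdet := det_two_cos_even_mul_mul_prod θ
  rw [← hXθ, ← hΩθ, hprod] at hdet
  field_simp
  linear_combination (-√2 * hdet + Ω.det * sq_sqrt zero_le_two) / 2
end

section
/- Let ℓ ≥ 1 be odd and let i be an integer with 1 ≤ i ≤ ℓ−1. Then (−1)^i + Σ_{k=1}^{(ℓ−1)/2} 2cos(2π(2k−1)i/(2ℓ)) = 0, i.e. (−1)^i + c(i) + c(3i) + ... + c((ℓ−2)i) = 0 where c(t) = 2cos(2πt/(2ℓ)). -/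
open Real Finset

/-- Telescoping: `2 cos((2k-1)θ) sin θ = sin(2kθ) - sin(2(k-1)θ)`. -/
lemma sum_two_cos_odd_mul_mul_sin (θ : ℝ) (m : ℕ) :
    (∑ k ∈ Icc 1 m, 2 * cos ((2 * (k : ℝ) - 1) * θ)) * sin θ = sin (2 * m * θ) := by
  induction m with
  | zero => simp
  | succ n ih =>
    rw [sum_Icc_succ_top (by omega), add_mul, ih]
    have h := sin_sub_sin (2 * ((n : ℝ) + 1) * θ) (2 * n * θ)
    rw [show (2 * ((n : ℝ) + 1) * θ - 2 * n * θ) / 2 = θ by ring,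
      show (2 * ((n : ℝ) + 1) * θ + 2 * n * θ) / 2 = (2 * ((n : ℝ) + 1) - 1) * θ by ring] at h
    push_cast
    linarith

lemma neg_one_pow_add_sum_two_cos_odd_mul_eq_zero (m n : ℕ) (hn₀ : 0 < n) (hn : n < 2 * m + 1) :
    (-1 : ℝ) ^ n + ∑ k ∈ Icc 1 m, 2 * cos ((2 * (k : ℝ) - 1) * (n * π / (2 * m + 1))) = 0 := by
  set θ : ℝ := n * π / (2 * m + 1)
  have hθ_pos : 0 < θ := by positivity
  have hθ_lt : θ < π := by
    rw [div_lt_iff₀ (by positivity), mul_comm]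
    exact mul_lt_mul_of_pos_left (by exact_mod_cast hn) pi_pos
  have hsin : sin θ ≠ 0 := (sin_pos_of_pos_of_lt_pi hθ_pos hθ_lt).ne'
  -- `2mθ = nπ - θ`, so the telescoped sum is `sin(nπ - θ) = -(-1)^n sin θ`
  have h2m : 2 * (m : ℝ) * θ = n * π - θ := by
    simp only [θ]
    field_simp
    ring
  have key := sum_two_cos_odd_mul_mul_sin θ m
  rw [h2m, sin_nat_mul_pi_sub] at key
  refine (mul_eq_zero.mp ?_).resolve_right hsin
  rw [add_mul, key]
  ring

theorem stmt_14_general (ℓ : ℕ) (hodd : Odd ℓ) (i : ℕ) (hi1 : 1 ≤ i) (hi : i ≤ ℓ - 1) :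
    (-1 : ℝ) ^ i
        + ∑ k ∈ Finset.Icc 1 ((ℓ - 1) / 2),
            2 * Real.cos (2 * π * (2 * (k : ℝ) - 1) * i / (2 * ℓ)) = 0 := by
  obtain ⟨m, rfl⟩ := hodd
  have hm : (2 * m + 1 - 1) / 2 = m := by omega
  rw [hm, ← neg_one_pow_add_sum_two_cos_odd_mul_eq_zero m i hi1 (by omega)]
  congr 1
  refine sum_congr rfl fun k _ => ?_
  congr 2
  push_cast
  field_simp

theorem stmt_14 (ℓ : ℕ) (hodd : Odd ℓ) (hℓ : 3 ≤ ℓ) (i : ℕ) (hi1 : 1 ≤ i) (hi : i ≤ ℓ - 1) :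
    (-1 : ℝ) ^ i
        + ∑ k ∈ Finset.Icc 1 ((ℓ - 1) / 2),
            2 * Real.cos (2 * π * (2 * (k : ℝ) - 1) * i / (2 * ℓ)) = 0 :=
  stmt_14_general ℓ hodd i hi1 hi
end

section
/- Let ℓ ≥ 1 and let Ω be the ℓ×ℓ matrix with Ω_{i,j} = 2cos(2π(i−1)(2j−1)/(4ℓ)), and let Y be the ℓ×ℓ matrix with Y_{i,j} = 2sin(2π·i(2j−1)/(4ℓ)) for 1 ≤ i,j ≤ ℓ. Then det Y = det Ω. -/
/-!
Reversing the rows of `Ω` and multiplying its `j`-th column by `(-1)^j` gives `Y`, because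
`(i + 1) + (ℓ - 1 - i) = ℓ` turns the sine argument into `(2j + 1)π/2` minus the cosine argument.
The row reversal has sign `∏ j, (-1)^j`, the same as the determinant of the sign diagonal,
so the two factors cancel.
-/

open Real Matrix

theorem Fin.revPerm_succ_eq_finRotate_mul (n : ℕ) :
    (Fin.revPerm : Equiv.Perm (Fin (n + 1))) =
      finRotate (n + 1) * (Fin.revPerm : Equiv.Perm (Fin n)).viaFintypeEmbedding Fin.castSuccEmb := by
  ext i
  induction i using Fin.lastCases with
  | last =>
    rw [Equiv.Perm.mul_apply, Equiv.Perm.viaFintypeEmbedding_apply_notMem_range]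
    · simp
    · simp [Fin.range_castSucc]
  | cast i =>
    rw [Equiv.Perm.mul_apply, ← Fin.coe_castSuccEmb, Equiv.Perm.viaFintypeEmbedding_apply_image]
    simp [Fin.rev_castSucc]

theorem Fin.sign_revPerm (n : ℕ) :
    Equiv.Perm.sign (Fin.revPerm : Equiv.Perm (Fin n)) = ∏ i : Fin n, (-1) ^ (i : ℕ) := by
  induction n with
  | zero => rfl
  | succ n ih =>
    rw [Fin.revPerm_succ_eq_finRotate_mul, map_mul, sign_finRotate,
      Equiv.Perm.viaFintypeEmbedding_sign, ih, Fin.prod_univ_castSucc]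
    simp [mul_comm]

theorem Matrix.det_submatrix_revPerm_mul_diagonal_neg_one_pow {R : Type*} [CommRing R] {n : ℕ}
    (A : Matrix (Fin n) (Fin n) R) :
    ((A * diagonal fun j : Fin n ↦ (-1 : R) ^ (j : ℕ)).submatrix Fin.revPerm id).det = A.det := by
  rw [det_permute, det_mul, det_diagonal, Fin.sign_revPerm, ← mul_assoc, mul_right_comm]
  push_cast
  rw [← Finset.prod_mul_distrib]
  simp [← mul_pow]

theorem Real.sin_odd_mul_pi_div_two_sub (j : ℕ) (x : ℝ) :
    sin ((2 * j + 1) * π / 2 - x) = (-1) ^ j * cos x := by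
  rw [← sin_pi_div_two_sub, ← sin_add_nat_mul_pi]
  ring_nf

theorem stmt_17_general (ℓ : ℕ)
    (Ω Y : Matrix (Fin ℓ) (Fin ℓ) ℝ)
    (hΩ : ∀ i j, Ω i j = 2 * Real.cos (2 * π * i.val * (2 * j.val + 1) / (4 * ℓ)))
    (hY : ∀ i j, Y i j = 2 * Real.sin (2 * π * (i.val + 1) * (2 * j.val + 1) / (4 * ℓ))) :
    Y.det = Ω.det := by
  suffices Y = (Ω * diagonal fun j : Fin ℓ ↦ (-1 : ℝ) ^ (j : ℕ)).submatrix Fin.revPerm id by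
    rw [this, det_submatrix_revPerm_mul_diagonal_neg_one_pow]
  ext i j
  have hℓ : (ℓ : ℝ) ≠ 0 := by exact_mod_cast i.pos.ne'
  have hrev : ((Fin.rev i : ℕ) : ℝ) = ℓ - 1 - i := by
    rw [Fin.val_rev, Nat.cast_sub (by omega)]
    push_cast
    ring
  have harg : 2 * π * ((i : ℕ) + 1 : ℝ) * (2 * j + 1) / (4 * ℓ) =
      (2 * j + 1) * π / 2 - 2 * π * (ℓ - 1 - i) * (2 * j + 1) / (4 * ℓ) := by
    field_simp
    ring
  simp only [submatrix_apply, mul_diagonal, Fin.revPerm_apply, id_eq, hY, hΩ, hrev]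
  rw [harg, sin_odd_mul_pi_div_two_sub]
  ring

theorem stmt_17 (ℓ : ℕ) (hℓ : 1 ≤ ℓ)
    (Ω Y : Matrix (Fin ℓ) (Fin ℓ) ℝ)
    (hΩ : ∀ i j, Ω i j = 2 * Real.cos (2 * π * i.val * (2 * j.val + 1) / (4 * ℓ)))
    (hY : ∀ i j, Y i j = 2 * Real.sin (2 * π * (i.val + 1) * (2 * j.val + 1) / (4 * ℓ))) :
    Y.det = Ω.det :=
  stmt_17_general ℓ Ω Y hΩ hY
end
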